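/- Let n ≥ 1 and m ≥ 1. Let h : ℝⁿ → ℝⁿ be three times continuously differentiable with Jacobian Dh(ẑ) invertible at every point ẑ. For k = 1,…,n and contexts r = 1,…,m let η_k^{(r)} : ℝ → ℝ be three times continuously differentiable, define F_r(ẑ) = Σ_{k=1}^n η_k^{(r)}((h(ẑ))_k) + log|det Dh(ẑ)|, and assume ∂²F_r/∂ẑ_i∂ẑ_j(ẑ) = 0 for all r, all i ≠ j, and all ẑ ∈ ℝⁿ. If for every z ∈ ℝⁿ the 2n vectors in ℝ^{m−1} given by ((η_k^{(r)})''(z_k) − (η_k^{(r−1)})''(z_k))_{r=2,…,m} and ((η_k^{(r)})'(z_k) − (η_k^{(r−1)})'(z_k))_{r=2,…,m}, for k = 1,…,n, are linearly independent, then for every ẑ ∈ ℝⁿ each row of Dh(ẑ) has exactly one nonzero entry, i.e. (Dh(ẑ))_{ki}·(Dh(ẑ))_{kj} = 0 for all k and all i ≠ j. -/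

import Mathlib

/-!
Differentiating `F_r` twice gives, with `J = Dh(ẑ)` and `z = h ẑ`,

`∂_j∂_i F_r = Σ_k ((η_k^{(r)})''(z_k) J_ki J_kj + (η_k^{(r)})'(z_k) ∂_j J_ki) + ∂_j∂_i log |det J|`.

The last term does not depend on the context `r`, so subtracting the vanishing identities of
consecutive contexts yields a linear relation among the `2n` difference vectors with coefficients
`J_ki J_kj` and `∂_j J_ki`. Linear independence forces all of these coefficients to vanish.
-/

open scoped BigOperators

/-- Partial derivative of `f : ℝⁿ → ℝ` in the `l`-th coordinate direction at `x`. -/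
noncomputable def pd {n : ℕ} (f : (Fin n → ℝ) → ℝ) (l : Fin n) (x : Fin n → ℝ) : ℝ :=
  fderiv ℝ f x (Pi.single l 1)

section PartialDerivative

variable {n : ℕ} {f g : (Fin n → ℝ) → ℝ} {l : Fin n} {x : Fin n → ℝ}

theorem pd_fun_add (hf : DifferentiableAt ℝ f x) (hg : DifferentiableAt ℝ g x) :
    pd (fun y => f y + g y) l x = pd f l x + pd g l x := by
  rw [pd, fderiv_fun_add hf hg]; rfl

theorem pd_fun_mul (hf : DifferentiableAt ℝ f x) (hg : DifferentiableAt ℝ g x) :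
    pd (fun y => f y * g y) l x = pd f l x * g x + f x * pd g l x := by
  rw [pd, fderiv_fun_mul hf hg, pd, pd]
  simp only [add_apply, smul_apply, smul_eq_mul]
  ring

theorem pd_fun_sum {ι : Type*} (s : Finset ι) {f : ι → (Fin n → ℝ) → ℝ}
    (hf : ∀ i ∈ s, DifferentiableAt ℝ (f i) x) :
    pd (fun y => ∑ i ∈ s, f i y) l x = ∑ i ∈ s, pd (f i) l x := by
  rw [pd, fderiv_fun_sum hf, sum_apply]; rfl

theorem pd_comp {φ : ℝ → ℝ} (hφ : DifferentiableAt ℝ φ (f x)) (hf : DifferentiableAt ℝ f x) :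
    pd (fun y => φ (f y)) l x = deriv φ (f x) * pd f l x := by
  change fderiv ℝ (φ ∘ f) x (Pi.single l 1) = _
  rw [(hφ.hasDerivAt.comp_hasFDerivAt x hf.hasFDerivAt).fderiv]; rfl

theorem pd_apply_eq_fderiv {ι : Type*} [Fintype ι] {u : (Fin n → ℝ) → ι → ℝ}
    (hu : DifferentiableAt ℝ u x) (k : ι) :
    pd (fun y => u y k) l x = fderiv ℝ u x (Pi.single l 1) k := by
  rw [pd, fderiv_apply hu]; rfl

theorem ContDiff.pd {m : ℕ} (hf : ContDiff ℝ (m + 1) f) : ContDiff ℝ m (pd f l) :=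
  (hf.fderiv_right le_rfl).clm_apply contDiff_const

end PartialDerivative

theorem contDiff_log_abs_det {E ι : Type*} [NormedAddCommGroup E] [NormedSpace ℝ E]
    [Fintype ι] [DecidableEq ι] {M : E → Matrix ι ι ℝ} {k : WithTop ℕ∞}
    (hM : ∀ i j, ContDiff ℝ k (fun x => M x i j)) (hdet : ∀ x, (M x).det ≠ 0) :
    ContDiff ℝ k (fun x => Real.log |(M x).det|) := by
  simp only [Real.log_abs]
  refine ContDiff.log ?_ hdet
  simp only [Matrix.det_apply']
  exact ContDiff.sum fun σ _ => contDiff_const.mul (contDiff_prod fun i _ => hM (σ i) i)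

section SecondOrder

variable {n : ℕ} {ι : Type*} [Fintype ι]

theorem pd_sum_comp_add {φ : ι → ℝ → ℝ} (hφ : ∀ k, Differentiable ℝ (φ k))
    {u : (Fin n → ℝ) → ι → ℝ} (hu : Differentiable ℝ u) {L : (Fin n → ℝ) → ℝ}
    (hL : Differentiable ℝ L) (i : Fin n) (x : Fin n → ℝ) :
    pd (fun y => ∑ k, φ k (u y k) + L y) i x
      = ∑ k, deriv (φ k) (u x k) * pd (fun y => u y k) i x + pd L i x := by
  rw [pd_fun_add (by fun_prop) (hL x), pd_fun_sum _ (fun k _ => by fun_prop)]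
  congr 1
  exact Finset.sum_congr rfl fun k _ => pd_comp (hφ k _) (by fun_prop)

theorem pd_pd_sum_comp_add {φ : ι → ℝ → ℝ} (hφ : ∀ k, ContDiff ℝ 2 (φ k))
    {u : (Fin n → ℝ) → ι → ℝ} (hu : ContDiff ℝ 2 u) {L : (Fin n → ℝ) → ℝ}
    (hL : ContDiff ℝ 2 L) (i j : Fin n) (x : Fin n → ℝ) :
    pd (fun y => pd (fun y => ∑ k, φ k (u y k) + L y) i y) j x
      = ∑ k, (deriv (deriv (φ k)) (u x k) * (pd (fun y => u y k) i x * pd (fun y => u y k) j x)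
          + deriv (φ k) (u x k) * pd (fun y => pd (fun y => u y k) i y) j x)
        + pd (fun y => pd L i y) j x := by
  have hφ' : ∀ k, Differentiable ℝ (deriv (φ k)) := fun k => (hφ k).differentiable_deriv_two
  have hu₁ : Differentiable ℝ u := hu.differentiable two_ne_zero
  have huk : ∀ k, ContDiff ℝ 2 (fun y => u y k) := contDiff_pi.1 hu
  have hpdu : ∀ k, Differentiable ℝ (pd (fun y => u y k) i) :=
    fun k => ((huk k).pd (m := 1)).differentiable one_ne_zero
  simp_rw [pd_sum_comp_add (fun k => (hφ k).differentiable two_ne_zero) hu₁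
    (hL.differentiable two_ne_zero) i]
  rw [pd_fun_add (by fun_prop) ((hL.pd (m := 1)).differentiable one_ne_zero x),
    pd_fun_sum _ (fun k _ => by fun_prop)]
  congr 1
  refine Finset.sum_congr rfl fun k _ => ?_
  rw [pd_fun_mul (by fun_prop) (hpdu k x), pd_comp (hφ' k _) (by fun_prop)]
  ring

end SecondOrder

theorem LinearIndependent.eq_zero_of_forall_sum_add_const_eq_zero {ι R S : Type*} [Fintype ι]
    {a b : ι → R → ℝ} {p q : S → R}
    (hli : LinearIndependent ℝ (fun kb : ι × Bool => fun s : S =>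
      if kb.2 then a kb.1 (q s) - a kb.1 (p s) else b kb.1 (q s) - b kb.1 (p s)))
    {c d : ι → ℝ} {e : ℝ} (hsum : ∀ r, ∑ k, (a k r * c k + b k r * d k) + e = 0) :
    c = 0 ∧ d = 0 := by
  have hcomb := Fintype.linearIndependent_iff.1 hli
      (fun kb => if kb.2 then c kb.1 else d kb.1) <| by
    funext s
    have hdiff := sub_eq_zero.2 ((hsum (q s)).trans (hsum (p s)).symm)
    simp only [Finset.sum_apply, Pi.smul_apply, smul_eq_mul, Pi.zero_apply,
      Fintype.sum_prod_type, Fintype.sum_bool, if_true, Bool.false_eq_true, if_false]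
    rw [← hdiff, add_sub_add_right_eq_sub, ← Finset.sum_sub_distrib]
    exact Finset.sum_congr rfl fun k _ => by ring
  exact ⟨funext fun k => hcomb (k, true), funext fun k => hcomb (k, false)⟩

theorem stmt7_general (n m : ℕ)
    (h : (Fin n → ℝ) → (Fin n → ℝ)) (hsmooth : ContDiff ℝ 3 h)
    (J : (Fin n → ℝ) → Matrix (Fin n) (Fin n) ℝ)
    (hJ : ∀ zh k i, J zh k i = fderiv ℝ h zh (Pi.single i 1) k)
    (hJinv : ∀ zh, IsUnit (J zh))
    -- η_k^{(r)}(z): log density of the k-th latent component in context r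
    (η : Fin n → Fin m → ℝ → ℝ)
    (hη : ∀ k r, ContDiff ℝ 3 (η k r))
    -- F_r(ẑ) = Σ_k η_k^{(r)}((h ẑ)_k) + log |det Dh(ẑ)|
    (F : Fin m → (Fin n → ℝ) → ℝ)
    (hF : ∀ r zh, F r zh = (∑ k, η k r (h zh k)) + Real.log |(J zh).det|)
    -- vanishing of the cross second-order partials of each F_r in ẑ
    (hcross : ∀ (r : Fin m) (i j : Fin n), i ≠ j → ∀ zh : Fin n → ℝ,
      pd (fun y => pd (fun x => F r x) i y) j zh = 0)
    -- for each z, the 2n vectors in ℝ^{m−1} of successive context-differences of the second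
    -- and first derivatives of the η_k at z_k are linearly independent
    (hli : ∀ z : Fin n → ℝ, LinearIndependent ℝ
      (fun kb : Fin n × Bool => fun r : {r : Fin m // r.1 ≠ 0} =>
        if kb.2 then
          deriv (deriv (η kb.1 r.1)) (z kb.1) -
          deriv (deriv (η kb.1 ⟨r.1.1 - 1, lt_of_le_of_lt (Nat.sub_le _ _) r.1.2⟩)) (z kb.1)
        else
          deriv (η kb.1 r.1) (z kb.1) -
          deriv (η kb.1 ⟨r.1.1 - 1, lt_of_le_of_lt (Nat.sub_le _ _) r.1.2⟩) (z kb.1))) :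
    ∀ (zh : Fin n → ℝ) (k i j : Fin n), i ≠ j → J zh k i * J zh k j = 0 := by
  intro zh k i j hij
  have hJ_eq_pd : ∀ x k i, J x k i = pd (fun y => h y k) i x := fun x k i => by
    rw [hJ, pd_apply_eq_fderiv ((hsmooth.differentiable (by norm_num)) x)]
  have hlogdet : ContDiff ℝ 2 (fun x => Real.log |(J x).det|) := by
    refine contDiff_log_abs_det (fun k i => ?_)
      fun x => ((hJinv x).map Matrix.detMonoidHom).ne_zero
    simp_rw [hJ_eq_pd]
    exact (contDiff_pi.1 hsmooth k).pd
  have hsum : ∀ r, ∑ k, (deriv (deriv (η k r)) (h zh k) * (J zh k i * J zh k j)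
      + deriv (η k r) (h zh k) * pd (fun y => pd (fun y => h y k) i y) j zh)
      + pd (fun y => pd (fun x => Real.log |(J x).det|) i y) j zh = 0 := by
    intro r
    rw [← hcross r i j hij zh, funext (hF r),
      pd_pd_sum_comp_add (fun k => (hη k r).of_le (by norm_num)) (hsmooth.of_le (by norm_num))
        hlogdet]
    simp only [hJ_eq_pd]
  have hcoeff := (hli (h zh)).eq_zero_of_forall_sum_add_const_eq_zero
    (a := fun k r => deriv (deriv (η k r)) (h zh k)) (b := fun k r => deriv (η k r) (h zh k))
    hsum
  exact congrFun hcoeff.1 k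

/-- Analytic form of Theorem 3 (identifiability under observation changes),
with contexts indexed by `Fin m`. -/
theorem stmt7 (n m : ℕ) (hn : 1 ≤ n) (hm : 1 ≤ m)
    (h : (Fin n → ℝ) → (Fin n → ℝ)) (hsmooth : ContDiff ℝ 3 h)
    (J : (Fin n → ℝ) → Matrix (Fin n) (Fin n) ℝ)
    (hJ : ∀ zh k i, J zh k i = fderiv ℝ h zh (Pi.single i 1) k)
    (hJinv : ∀ zh, IsUnit (J zh))
    -- η_k^{(r)}(z): log density of the k-th latent component in context r
    (η : Fin n → Fin m → ℝ → ℝ)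
    (hη : ∀ k r, ContDiff ℝ 3 (η k r))
    -- F_r(ẑ) = Σ_k η_k^{(r)}((h ẑ)_k) + log |det Dh(ẑ)|
    (F : Fin m → (Fin n → ℝ) → ℝ)
    (hF : ∀ r zh, F r zh = (∑ k, η k r (h zh k)) + Real.log |(J zh).det|)
    -- vanishing of the cross second-order partials of each F_r in ẑ
    (hcross : ∀ (r : Fin m) (i j : Fin n), i ≠ j → ∀ zh : Fin n → ℝ,
      pd (fun y => pd (fun x => F r x) i y) j zh = 0)
    -- for each z, the 2n vectors in ℝ^{m−1} of successive context-differences of the second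
    -- and first derivatives of the η_k at z_k are linearly independent
    (hli : ∀ z : Fin n → ℝ, LinearIndependent ℝ
      (fun kb : Fin n × Bool => fun r : {r : Fin m // r.1 ≠ 0} =>
        if kb.2 then
          deriv (deriv (η kb.1 r.1)) (z kb.1) -
          deriv (deriv (η kb.1 ⟨r.1.1 - 1, lt_of_le_of_lt (Nat.sub_le _ _) r.1.2⟩)) (z kb.1)
        else
          deriv (η kb.1 r.1) (z kb.1) -
          deriv (η kb.1 ⟨r.1.1 - 1, lt_of_le_of_lt (Nat.sub_le _ _) r.1.2⟩) (z kb.1))) :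
    ∀ (zh : Fin n → ℝ) (k i j : Fin n), i ≠ j → J zh k i * J zh k j = 0 :=
  stmt7_general n m h hsmooth J hJ hJinv η hη F hF hcross hli
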